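/- arXiv:1404.4622 — 2 statements merged into one kernel-verified Lean document; each statement's English description precedes it below -/
import Mathlib

section
/- Let ℓ ≥ 2 and let p_1 < p_2 < … < p_ℓ be primes with p_k > 2ℓ·ln(2ℓ) for every k. For each integer i ≥ 0 define S_i = { 1 + (p_1 + … + p_{j−1}) + (i mod p_j) : j ∈ {1,…,ℓ} }. Then for every integer i ≥ 1, Σ_{j=0}^{i−1} 2^{|S_i ∩ S_j|} ≤ i · ln(2ℓ)/(ln(2ℓ) − 1). -/
/-! The blocks `[1 + p₁ + ⋯ + p_{k-1}, p₁ + ⋯ + p_k]` are disjoint, so `|S_i ∩ S_j|` counts the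
`k` with `i ≡ j (mod p_k)`. Writing `2^{|S_i ∩ S_j|}` as a sum over the subsets `K` of these `k`
and swapping the sums, each `K` contributes the number of `j < i` with `j ≡ i` modulo
`∏_{k ∈ K} p_k` (Chinese remainder theorem), which is at most `i / ∏_{k ∈ K} p_k`. Hence the sum
is at most `i ∏_k (1 + 1/p_k) ≤ i exp(∑_k 1/p_k) ≤ i / (1 - 1/ln(2ℓ))`, because
`∑_k 1/p_k < ℓ / (2ℓ ln(2ℓ)) < 1/ln(2ℓ)`. -/

open Finset Function

def blockOffset {ι : Type*} [Fintype ι] [LinearOrder ι] (p : ι → ℕ) (j : ι) : ℕ :=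
  ∑ k ∈ univ.filter (fun k => k < j), p k

section Blocks

variable {ι : Type*} [Fintype ι] [LinearOrder ι] (p : ι → ℕ)

lemma blockOffset_add_le_of_lt {j j' : ι} (h : j < j') :
    blockOffset p j + p j ≤ blockOffset p j' := by
  unfold blockOffset
  rw [add_comm, ← sum_insert (by simp)]
  refine sum_le_sum_of_subset (insert_subset (by simpa) fun k hk => ?_)
  simp only [mem_filter, mem_univ, true_and] at hk ⊢
  exact hk.trans h

lemma eq_of_blockOffset_add_eq {j j' : ι} {r r' : ℕ} (hr : r < p j) (hr' : r' < p j')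
    (h : blockOffset p j + r = blockOffset p j' + r') : j = j' := by
  by_contra hne
  rcases lt_or_gt_of_ne hne with hlt | hlt
  · have := blockOffset_add_le_of_lt p hlt; omega
  · have := blockOffset_add_le_of_lt p hlt; omega

lemma card_image_inter_image_blockOffset (c : ℕ) {x y : ι → ℕ} (hx : ∀ k, x k < p k)
    (hy : ∀ k, y k < p k) :
    #(univ.image (fun k => c + blockOffset p k + x k) ∩
        univ.image (fun k => c + blockOffset p k + y k)) = #{k | x k = y k} := by
  have hinter : univ.image (fun k => c + blockOffset p k + x k) ∩
      univ.image (fun k => c + blockOffset p k + y k) =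
      ({k | x k = y k} : Finset ι).image (fun k => c + blockOffset p k + x k) := by
    ext n
    simp only [mem_inter, mem_image, mem_filter, mem_univ, true_and]
    constructor
    · rintro ⟨⟨k, rfl⟩, k', hk'⟩
      obtain rfl := eq_of_blockOffset_add_eq p (hy k') (hx k) (by omega)
      exact ⟨k', by omega, rfl⟩
    · rintro ⟨k, hk, rfl⟩
      exact ⟨⟨k, rfl⟩, k, by rw [hk]⟩
  rw [hinter, card_image_of_injOn]
  intro a _ b _ hab
  exact eq_of_blockOffset_add_eq p (hx a) (hx b) (by simp only at hab; omega)

end Blocks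

lemma Nat.modEq_prod_of_pairwise_coprime {ι : Type*} {K : Finset ι} {p : ι → ℕ}
    (hcop : (K : Set ι).Pairwise (Nat.Coprime on p)) {a b : ℕ}
    (h : ∀ k ∈ K, a ≡ b [MOD p k]) : a ≡ b [MOD ∏ k ∈ K, p k] := by
  simp only [Nat.modEq_iff_dvd] at h ⊢
  push_cast
  exact prod_dvd_of_coprime (hcop.mono' fun _ _ => Nat.isCoprime_iff_coprime.mpr) h

lemma card_filter_forall_modEq_le {ι : Type*} (p : ι → ℕ) {K : Finset ι}
    (hpos : ∀ k ∈ K, 0 < p k) (hcop : (K : Set ι).Pairwise (Nat.Coprime on p)) (i : ℕ) :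
    #{j ∈ range i | ∀ k ∈ K, i ≡ j [MOD p k]} ≤ i / ∏ k ∈ K, p k := by
  calc #{j ∈ range i | ∀ k ∈ K, i ≡ j [MOD p k]}
      ≤ #{j ∈ range i | j ≡ i [MOD ∏ k ∈ K, p k]} :=
        card_le_card <| monotone_filter_right _ fun j _ h =>
          (Nat.modEq_prod_of_pairwise_coprime hcop h).symm
    _ = i / ∏ k ∈ K, p k := by
        rw [← Nat.count_eq_card_filter_range, Nat.count_modEq_card _ (prod_pos hpos)]
        simp

lemma sum_two_pow_card_filter {α β : Type*} (s : Finset α) (t : Finset β)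
    (R : β → α → Prop) [∀ j, DecidablePred (R j)] :
    ∑ j ∈ t, 2 ^ #{k ∈ s | R j k} = ∑ K ∈ s.powerset, #{j ∈ t | ∀ k ∈ K, R j k} := by
  have hpow : ∀ j, 2 ^ #{k ∈ s | R j k} = #{K ∈ s.powerset | ∀ k ∈ K, R j k} := fun j => by
    rw [← card_powerset]
    congr 1
    ext K
    simp only [mem_powerset, mem_filter, subset_iff]
    grind
  rw [sum_congr rfl fun j _ => hpow j]
  simp only [card_filter]
  exact sum_comm

lemma prod_one_add_le_one_div_one_sub {ι : Type*} (s : Finset ι) {x : ι → ℝ}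
    (hx : ∀ k, 0 ≤ x k) {a : ℝ} (hsum : ∑ k ∈ s, x k ≤ a) (ha : a < 1) :
    ∏ k ∈ s, (1 + x k) ≤ 1 / (1 - a) :=
  calc ∏ k ∈ s, (1 + x k) ≤ Real.exp (∑ k ∈ s, x k) := Real.prod_one_add_le_exp_sum s hx
    _ ≤ Real.exp a := Real.exp_le_exp.mpr hsum
    _ ≤ 1 / (1 - a) :=
        Real.exp_bound_div_one_sub_of_interval ((sum_nonneg fun k _ => hx k).trans hsum) ha

lemma sum_one_div_le_of_forall_lt {ι : Type*} [Fintype ι] {q : ι → ℝ} {c : ℝ} (hc : 0 < c)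
    (hq : ∀ k, Fintype.card ι * c < q k) : ∑ k, 1 / q k ≤ 1 / c := by
  rcases (Fintype.card ι).eq_zero_or_pos with hι | hι
  · simp [Fintype.card_eq_zero_iff.mp hι, hc.le]
  calc ∑ k, 1 / q k ≤ ∑ _k : ι, 1 / (Fintype.card ι * c) :=
        sum_le_sum fun k _ => one_div_le_one_div_of_le (by positivity) (hq k).le
    _ = 1 / c := by
        rw [sum_const, card_univ, nsmul_eq_mul]
        field_simp

lemma one_lt_log_two_mul {n : ℕ} (hn : 2 ≤ n) : 1 < Real.log (2 * n) := by
  rw [← Real.log_exp 1]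
  refine Real.log_lt_log (Real.exp_pos 1) ?_
  have : (2 : ℝ) ≤ n := by exact_mod_cast hn
  linarith [Real.exp_one_lt_d9]

lemma sum_two_pow_card_modEq_le {ι : Type*} [Fintype ι] (p : ι → ℕ)
    (hpos : ∀ k, 0 < p k) (hcop : Pairwise (Nat.Coprime on p)) (i : ℕ) :
    ∑ j ∈ range i, (2 : ℝ) ^ #{k | i ≡ j [MOD p k]} ≤ i * ∏ k, (1 + 1 / (p k : ℝ)) := by
  rw [prod_one_add, mul_sum]
  calc ∑ j ∈ range i, (2 : ℝ) ^ #{k | i ≡ j [MOD p k]}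
      = ∑ K ∈ univ.powerset, (#{j ∈ range i | ∀ k ∈ K, i ≡ j [MOD p k]} : ℝ) := by
        exact_mod_cast sum_two_pow_card_filter univ (range i) fun j k => i ≡ j [MOD p k]
    _ ≤ ∑ K ∈ univ.powerset, (i : ℝ) * ∏ k ∈ K, 1 / (p k : ℝ) := by
        refine sum_le_sum fun K _ => ?_
        calc (#{j ∈ range i | ∀ k ∈ K, i ≡ j [MOD p k]} : ℝ)
            ≤ ((i / ∏ k ∈ K, p k : ℕ) : ℝ) := by
              exact_mod_cast card_filter_forall_modEq_le p (fun k _ => hpos k)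
                (hcop.set_pairwise _) i
          _ ≤ (i : ℝ) / ∏ k ∈ K, (p k : ℝ) := by exact_mod_cast Nat.cast_div_le
          _ = (i : ℝ) * ∏ k ∈ K, 1 / (p k : ℝ) := by
              simp only [div_eq_mul_inv, one_mul, prod_inv_distrib]

theorem stmt7_general (ℓ : ℕ) (hℓ : 2 ≤ ℓ) (p : Fin ℓ → ℕ)
    (hp : ∀ k, (p k).Prime) (hmono : StrictMono p)
    (hbig : ∀ k, (2 * ℓ : ℝ) * Real.log (2 * ℓ) < p k)
    (S : ℕ → Finset ℕ)
    (hS : ∀ i, S i = Finset.image (fun j : Fin ℓ =>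
        1 + (∑ k ∈ Finset.univ.filter (fun k => k < j), p k) + i % p j) Finset.univ)
    (i : ℕ) :
    (∑ j ∈ Finset.range i, (2 : ℝ) ^ ((S i ∩ S j).card))
      ≤ i * Real.log (2 * ℓ) / (Real.log (2 * ℓ) - 1) := by
  set L := Real.log (2 * ℓ)
  have hL : 1 < L := one_lt_log_two_mul hℓ
  have hpos : ∀ k, 0 < p k := fun k => (hp k).pos
  have hcop : Pairwise (Nat.Coprime on p) := fun a b hab =>
    (Nat.coprime_primes (hp a) (hp b)).mpr (hmono.injective.ne hab)
  have hinter : ∀ j, #(S i ∩ S j) = #{k | i ≡ j [MOD p k]} := fun j => by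
    rw [hS, hS]
    exact card_image_inter_image_blockOffset p 1 (fun k => Nat.mod_lt _ (hpos k))
      (fun k => Nat.mod_lt _ (hpos k))
  have hprod : ∏ k, (1 + 1 / (p k : ℝ)) ≤ L / (L - 1) := by
    have hsum : ∑ k, 1 / (p k : ℝ) ≤ 1 / L := by
      refine sum_one_div_le_of_forall_lt (by linarith) fun k => ?_
      have : (0 : ℝ) < ℓ * L := mul_pos (by norm_cast; omega) (by linarith)
      rw [Fintype.card_fin]
      linarith [hbig k]
    calc ∏ k, (1 + 1 / (p k : ℝ)) ≤ 1 / (1 - 1 / L) :=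
          prod_one_add_le_one_div_one_sub _ (fun k => by positivity) hsum
            ((div_lt_one (by linarith)).mpr hL)
      _ = L / (L - 1) := by field_simp
  calc ∑ j ∈ range i, (2 : ℝ) ^ #(S i ∩ S j)
      = ∑ j ∈ range i, (2 : ℝ) ^ #{k | i ≡ j [MOD p k]} := by simp only [hinter]
    _ ≤ i * ∏ k, (1 + 1 / (p k : ℝ)) := sum_two_pow_card_modEq_le p hpos hcop i
    _ ≤ i * (L / (L - 1)) := by gcongr
    _ = i * L / (L - 1) := (mul_div_assoc _ _ _).symm

/-- For the CRT construction with primes p_k > 2ℓ·ln(2ℓ), we have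
Σ_{j<i} 2^{|S_i ∩ S_j|} ≤ i·ln(2ℓ)/(ln(2ℓ) − 1). -/
theorem stmt7 (ℓ : ℕ) (hℓ : 2 ≤ ℓ) (p : Fin ℓ → ℕ)
    (hp : ∀ k, (p k).Prime) (hmono : StrictMono p)
    (hbig : ∀ k, (2 * ℓ : ℝ) * Real.log (2 * ℓ) < p k)
    (S : ℕ → Finset ℕ)
    (hS : ∀ i, S i = Finset.image (fun j : Fin ℓ =>
        1 + (∑ k ∈ Finset.univ.filter (fun k => k < j), p k) + i % p j) Finset.univ)
    (i : ℕ) (hi : 1 ≤ i) :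
    (∑ j ∈ Finset.range i, (2 : ℝ) ^ ((S i ∩ S j).card))
      ≤ i * Real.log (2 * ℓ) / (Real.log (2 * ℓ) - 1) :=
  stmt7_general ℓ hℓ p hp hmono hbig S hS i
end

section
/- Fix a rational number c with 0 < c < 1 and a natural number γ. Then there exists N such that for every natural number n ≥ N for which c·n is a natural number, m(n, c·n, γ) = ⌊1/c⌋. -/
/-- An (n, ℓ, γ)-sharing set family of size m: m distinct subsets of {1,…,n},
each of size ℓ, pairwise intersecting in at most γ elements. -/
def IsSharingFamily (n ℓ γ m : ℕ) : Prop :=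
  ∃ S : Fin m → Finset ℕ, Function.Injective S ∧
    (∀ i, S i ⊆ Finset.Icc 1 n) ∧ (∀ i, (S i).card = ℓ) ∧
    (∀ i j, i ≠ j → (S i ∩ S j).card ≤ γ)

lemma aux_union {ι : Type*} [DecidableEq ι] (S : ι → Finset ℕ) (γ ℓ : ℕ)
    (s : Finset ι) (hcard : ∀ i ∈ s, ℓ ≤ (S i).card)
    (hint : ∀ i ∈ s, ∀ j ∈ s, i ≠ j → (S i ∩ S j).card ≤ γ) :
    s.card * ℓ ≤ (s.biUnion S).card + s.card * s.card * γ := by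
  induction s using Finset.induction_on with
  | empty => simp
  | @insert a s ha ih =>
    have hIH := ih (fun i hi => hcard i (Finset.mem_insert_of_mem hi))
      (fun i hi j hj hij => hint i (Finset.mem_insert_of_mem hi) j (Finset.mem_insert_of_mem hj) hij)
    have hinter : (S a ∩ s.biUnion S).card ≤ s.card * γ := by
      have h1 : S a ∩ s.biUnion S = s.biUnion (fun i => S a ∩ S i) := by
        ext x; simp [Finset.mem_biUnion]; tauto
      rw [h1]
      calc (s.biUnion fun i => S a ∩ S i).card ≤ ∑ i ∈ s, (S a ∩ S i).card :=
            Finset.card_biUnion_le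
        _ ≤ ∑ i ∈ s, γ := by
            apply Finset.sum_le_sum
            intro i hi
            exact hint a (Finset.mem_insert_self a s) i (Finset.mem_insert_of_mem hi)
              (by rintro rfl; exact ha hi)
        _ = s.card * γ := by rw [Finset.sum_const, smul_eq_mul]
    have hu : (S a).card + (s.biUnion S).card
        ≤ ((insert a s).biUnion S).card + s.card * γ := by
      rw [Finset.biUnion_insert]
      have := Finset.card_union_add_card_inter (S a) (s.biUnion S)
      omega
    have hcardins : (insert a s).card = s.card + 1 := Finset.card_insert_of_notMem ha
    have hla : ℓ ≤ (S a).card := hcard a (Finset.mem_insert_self a s)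
    rw [hcardins]
    nlinarith [hIH, hu, hla]

/-- For fixed 0 < c < 1 and γ, for all sufficiently large n with c·n ∈ ℕ,
m(n, c·n, γ) = ⌊1/c⌋. -/
theorem stmt13 (c : ℚ) (hc0 : 0 < c) (hc1 : c < 1) (γ : ℕ) :
    ∃ N : ℕ, ∀ n : ℕ, N ≤ n → ∀ ℓ : ℕ, (ℓ : ℚ) = c * n →
      IsGreatest {m | IsSharingFamily n ℓ γ m} ⌊(1 / c : ℚ)⌋₊ := by
  set k : ℕ := ⌊(1 / c : ℚ)⌋₊ with hk
  have hc1' : (1 : ℚ) ≤ 1 / c := by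
    exact one_le_one_div hc0 (le_of_lt hc1)
  have hkc : (k : ℚ) ≤ 1 / c := Nat.floor_le (by positivity)
  have hk1c : (1 / c : ℚ) < k + 1 := Nat.lt_floor_add_one _
  have hk1 : 1 ≤ k := Nat.le_floor hc1'
  have hε : (0 : ℚ) < (k + 1) * c - 1 := by
    have : (1 : ℚ) < (k + 1) * c := by
      rw [div_lt_iff₀ hc0] at hk1c
      linarith
    linarith
  set ε : ℚ := (k + 1) * c - 1 with hεdef
  refine ⟨max ⌈(1 / c : ℚ)⌉₊ ⌈(((k + 1)^2 * γ : ℚ) + 1) / ε⌉₊, ?_⟩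
  intro n hn ℓ hℓ
  have hn1 : (1 / c : ℚ) ≤ n := by
    calc (1 / c : ℚ) ≤ ⌈(1 / c : ℚ)⌉₊ := Nat.le_ceil _
      _ ≤ n := by exact_mod_cast le_trans (le_max_left _ _) hn
  have hn2 : (((k + 1)^2 * γ : ℚ) + 1) / ε ≤ n := by
    calc (((k + 1)^2 * γ : ℚ) + 1) / ε ≤ ⌈(((k + 1)^2 * γ : ℚ) + 1) / ε⌉₊ := Nat.le_ceil _
      _ ≤ n := by exact_mod_cast le_trans (le_max_right _ _) hn
  have hℓ1 : 1 ≤ ℓ := by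
    have : (1 : ℚ) ≤ ℓ := by
      rw [hℓ]
      calc (1 : ℚ) = c * (1 / c) := by field_simp
        _ ≤ c * n := by
          apply mul_le_mul_of_nonneg_left hn1 (le_of_lt hc0)
    exact_mod_cast this
  have hkℓn : k * ℓ ≤ n := by
    have : ((k * ℓ : ℕ) : ℚ) ≤ (n : ℚ) := by
      push_cast
      rw [hℓ]
      calc (k : ℚ) * (c * n) ≤ (1 / c) * (c * n) := by
            apply mul_le_mul_of_nonneg_right hkc
            positivity
        _ = n := by field_simp
    exact_mod_cast this
  constructor
  · -- membership: k disjoint blocks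
    refine ⟨fun i => Finset.Icc ((i : ℕ) * ℓ + 1) (((i : ℕ) + 1) * ℓ), ?_, ?_, ?_, ?_⟩
    · intro i j hij
      simp only at hij
      have hmi : (i : ℕ) * ℓ + 1 ∈ Finset.Icc ((i : ℕ) * ℓ + 1) (((i : ℕ) + 1) * ℓ) := by
        simp [Finset.mem_Icc]; nlinarith
      have hmj : (j : ℕ) * ℓ + 1 ∈ Finset.Icc ((j : ℕ) * ℓ + 1) (((j : ℕ) + 1) * ℓ) := by
        simp [Finset.mem_Icc]; nlinarith
      rw [hij] at hmi
      rw [← hij] at hmj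
      simp [Finset.mem_Icc] at hmi hmj
      have : (i : ℕ) = (j : ℕ) := by nlinarith
      exact Fin.ext this
    · intro i x hx
      simp [Finset.mem_Icc] at hx ⊢
      constructor
      · omega
      · calc x ≤ ((i : ℕ) + 1) * ℓ := hx.2
          _ ≤ k * ℓ := Nat.mul_le_mul_right _ (i.2)
          _ ≤ n := hkℓn
    · intro i
      rw [Nat.card_Icc]
      ring_nf
      omega
    · intro i j hij
      have hemp : ∀ a b : ℕ, a < b →
          Finset.Icc (a * ℓ + 1) ((a + 1) * ℓ) ∩ Finset.Icc (b * ℓ + 1) ((b + 1) * ℓ) = ∅ := by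
        intro a b hab
        ext x
        simp only [Finset.mem_inter, Finset.mem_Icc, Finset.notMem_empty, iff_false]
        rintro ⟨⟨_, h2⟩, ⟨h3, _⟩⟩
        have : (a + 1) * ℓ ≤ b * ℓ := Nat.mul_le_mul_right _ hab
        omega
      rcases lt_or_gt_of_ne (fun h => hij (Fin.ext h)) with h | h
      · rw [hemp _ _ h]; simp
      · rw [Finset.inter_comm, hemp _ _ h]; simp
  · -- upper bound
    intro m hm
    by_contra hmk
    push_neg at hmk
    obtain ⟨S, hinj, hsub, hcard, hint⟩ := hm
    have hm1 : k + 1 ≤ m := hmk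
    obtain ⟨t, _, htcard⟩ := Finset.exists_subset_card_eq
      (show k + 1 ≤ (Finset.univ : Finset (Fin m)).card by simpa using hm1)
    have haux := aux_union S γ ℓ t (fun i _ => (hcard i).ge)
      (fun i _ j _ hij => hint i j hij)
    rw [htcard] at haux
    have hsubn : t.biUnion S ⊆ Finset.Icc 1 n := by
      intro x hx
      obtain ⟨i, _, hxi⟩ := Finset.mem_biUnion.mp hx
      exact hsub i hxi
    have hbn : (t.biUnion S).card ≤ n := by
      calc (t.biUnion S).card ≤ (Finset.Icc 1 n).card := Finset.card_le_card hsubn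
        _ = n := by rw [Nat.card_Icc]; omega
    have hnat : (k + 1) * ℓ ≤ n + (k + 1) * (k + 1) * γ := by omega
    have hQ : ((k : ℚ) + 1) * ℓ ≤ n + (k + 1) * (k + 1) * γ := by exact_mod_cast hnat
    rw [hℓ] at hQ
    have hεn : (((k : ℚ) + 1)^2 * γ + 1) ≤ ε * n := by
      rw [div_le_iff₀ hε] at hn2
      linarith [hn2]
    rw [hεdef] at hεn
    nlinarith [hεn, hQ]
end
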